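/- A finite simple bipartite graph G with no isolated vertices is unmixed if and only if it has a perfect matching {x_1,y_1},...,{x_n,y_n} with x_i in one part and y_i in the other, such that for each i the induced subgraph on N(x_i) ∪ N(y_i) is complete bipartite (every vertex of N(y_i) is adjacent to every vertex of N(x_i)). -/

import Mathlib

open SimpleGraph MvPolynomial

variable {V : Type*}

/-- `s` is an independent set of the graph `G`. -/
def IsIndep (G : SimpleGraph V) (s : Set V) : Prop :=
  s.Pairwise fun a b => ¬ G.Adj a b

/-- `s` is a maximal independent set of the graph `G`. -/
def IsMaxIndep (G : SimpleGraph V) (s : Set V) : Prop :=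
  IsIndep G s ∧ ∀ t : Set V, IsIndep G t → s ⊆ t → s = t

/-- `G` is unmixed: all maximal independent sets have the same cardinality. -/
def Unmixed (G : SimpleGraph V) : Prop :=
  ∀ s t : Set V, IsMaxIndep G s → IsMaxIndep G t → s.ncard = t.ncard

/-- `V1, V2` form a bipartition of the graph `G`. -/
def IsBipartition (G : SimpleGraph V) (V1 V2 : Set V) : Prop :=
  Disjoint V1 V2 ∧ V1 ∪ V2 = Set.univ ∧
    ∀ ⦃a b⦄, G.Adj a b → (a ∈ V1 ∧ b ∈ V2) ∨ (a ∈ V2 ∧ b ∈ V1)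

/-- `G` has no isolated vertices. -/
def NoIsolated (G : SimpleGraph V) : Prop := ∀ v, ∃ w, G.Adj v w

/-- The edges `{x i, y i}` form a perfect matching of `G`. -/
def PMatch (G : SimpleGraph V) (n : ℕ) (x y : Fin n → V) : Prop :=
  Function.Injective x ∧ Function.Injective y ∧ (∀ i j, x i ≠ y j) ∧
    (∀ v, (∃ i, v = x i) ∨ (∃ i, v = y i)) ∧ ∀ i, G.Adj (x i) (y i)

/-- Condition 1: for each `i` the induced subgraph on `N(x i) ∪ N(y i)` is complete
bipartite, i.e. every vertex of `N(y i)` is adjacent to every vertex of `N(x i)`. -/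
def Cond1 (G : SimpleGraph V) (n : ℕ) (x y : Fin n → V) : Prop :=
  ∀ i, ∀ a ∈ G.neighborSet (y i), ∀ b ∈ G.neighborSet (x i), G.Adj a b

/-- Condition 2: for `i ≠ j`, not both `x i ~ y j` and `x j ~ y i`. -/
def Cond2 (G : SimpleGraph V) (n : ℕ) (x y : Fin n → V) : Prop :=
  ∀ i j, i ≠ j → G.Adj (x i) (y j) → ¬ G.Adj (x j) (y i)

/-!
Relative to a perfect matching `{x i, y i}`, an independent set has exactly as many vertices as
matching edges it meets, and condition 1 forces a maximal independent set to meet all of them.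
Conversely, if `G` is unmixed then `V1` and `V2` are maximal independent sets of the same size,
Hall's condition holds for `V1`, and the resulting perfect matching satisfies condition 1 by the
same count.
-/

section

variable {G : SimpleGraph V} {s t V1 V2 : Set V}

lemma IsIndep.mono (ht : IsIndep G t) (hst : s ⊆ t) : IsIndep G s :=
  Set.Pairwise.mono hst ht

lemma isIndep_pair {a b : V} (h : ¬ G.Adj a b) : IsIndep G {a, b} :=
  Set.pairwise_pair.2 fun _ => ⟨h, fun h' => h h'.symm⟩

lemma IsIndep.insert (hs : IsIndep G s) {v : V} (hv : ∀ b ∈ s, ¬ G.Adj v b) :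
    IsIndep G (insert v s) :=
  Set.pairwise_insert.2 ⟨hs, fun b hb _ => ⟨hv b hb, fun h => hv b hb h.symm⟩⟩

lemma IsMaxIndep.exists_adj_of_notMem (hs : IsMaxIndep G s) {v : V} (hv : v ∉ s) :
    ∃ b ∈ s, G.Adj v b := by
  by_contra! h
  exact hv (hs.2 _ (hs.1.insert h) (Set.subset_insert v s) ▸ Set.mem_insert v s)

lemma IsIndep.exists_isMaxIndep_superset [Finite V] (hs : IsIndep G s) :
    ∃ t, s ⊆ t ∧ IsMaxIndep G t := by
  obtain ⟨t, hst, ht, htmax⟩ :=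
    (Set.toFinite {t : Set V | IsIndep G t}).exists_le_maximal (a := s) hs
  exact ⟨t, hst, ht, fun u hu htu => htu.antisymm (htmax hu htu)⟩

lemma Unmixed.ncard_le_of_isIndep [Finite V] (hu : Unmixed G) (ht : IsMaxIndep G t)
    (hs : IsIndep G s) : s.ncard ≤ t.ncard := by
  obtain ⟨w, hsw, hw⟩ := hs.exists_isMaxIndep_superset
  exact (Set.ncard_le_ncard hsw).trans (hu w t hw ht).le

lemma SimpleGraph.IsBipartiteWith.isIndep_left (h : G.IsBipartiteWith s t) : IsIndep G s :=
  fun _ ha _ hb _ hab => Set.disjoint_left.mp h.disjoint hb (h.mem_of_mem_adj ha hab)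

lemma IsBipartition.isBipartiteWith (hb : IsBipartition G V1 V2) : G.IsBipartiteWith V1 V2 :=
  ⟨hb.1, hb.2.2⟩

lemma IsBipartition.symm (hb : IsBipartition G V1 V2) : IsBipartition G V2 V1 :=
  ⟨hb.1.symm, Set.union_comm V1 V2 ▸ hb.2.1, fun _ _ h => (hb.2.2 h).symm⟩

lemma IsBipartition.isMaxIndep_left (hb : IsBipartition G V1 V2) (hni : NoIsolated G) :
    IsMaxIndep G V1 := by
  refine ⟨hb.isBipartiteWith.isIndep_left, fun t ht hsub => hsub.antisymm fun v hvt => ?_⟩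
  by_contra hv1
  obtain ⟨w, hvw⟩ := hni v
  have hv2 : v ∈ V2 := (hb.2.1 ▸ Set.mem_univ v : v ∈ V1 ∪ V2).resolve_left hv1
  exact ht hvt (hsub (hb.isBipartiteWith.mem_of_mem_adj' hv2 hvw.symm)) hvw.ne hvw

/-- Hall's condition: if `s ⊆ V1` had fewer neighbours than elements, trading `N(s)` for `s`
inside `V2` would give an independent set larger than the maximal one `V2`. -/
lemma Unmixed.ncard_le_ncard_neighborSet [Finite V] (hu : Unmixed G)
    (hb : G.IsBipartiteWith V1 V2) (h2 : IsMaxIndep G V2) (hs : s ⊆ V1) :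
    s.ncard ≤ (⋃ v ∈ s, G.neighborSet v).ncard := by
  set N := ⋃ v ∈ s, G.neighborSet v
  have hN : N ⊆ V2 :=
    Set.iUnion₂_subset fun v hv => isBipartiteWith_neighborSet_subset hb (hs hv)
  have hind : IsIndep G ((V2 \ N) ∪ s) := by
    rintro a (ha | ha) b (hb' | hb') hne hab
    · exact h2.1 ha.1 hb'.1 hne hab
    · exact ha.2 (Set.mem_biUnion hb' hab.symm)
    · exact hb'.2 (Set.mem_biUnion ha hab)
    · exact hb.isIndep_left (hs ha) (hs hb') hne hab
  have hcard := hu.ncard_le_of_isIndep h2 hind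
  rw [Set.ncard_union_eq (hb.disjoint.symm.mono Set.sdiff_subset hs), Set.ncard_sdiff hN] at hcard
  have := Set.ncard_le_ncard hN
  omega

lemma exists_injective_adj_of_forall_ncard_le [Finite V] {p : Set V}
    (h : ∀ s ⊆ p, s.ncard ≤ (⋃ v ∈ s, G.neighborSet v).ncard) :
    ∃ f : p → V, Function.Injective f ∧ ∀ u : p, G.Adj u (f u) := by
  classical
  have := Fintype.ofFinite V
  obtain ⟨f, hf, hadj⟩ := (Finset.all_card_le_biUnion_card_iff_exists_injective
      fun u : p => G.neighborFinset u).mp fun s => by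
    have := h (s.image Subtype.val) (by simp)
    rw [Set.ncard_coe_finset, Finset.card_image_of_injective _ Subtype.val_injective] at this
    simpa [← Set.ncard_coe_finset, neighborFinset_def]
  exact ⟨f, hf, fun u => (G.mem_neighborFinset _ _).mp (hadj u)⟩

lemma IsBipartition.exists_pMatch_of_injective [Finite V1] (hb : IsBipartition G V1 V2)
    (f : V1 → V) (hf : Function.Injective f) (hrange : Set.range f = V2)
    (hadj : ∀ u : V1, G.Adj u (f u)) :
    ∃ (n : ℕ) (x y : Fin n → V), (∀ i, x i ∈ V1) ∧ (∀ i, y i ∈ V2) ∧ PMatch G n x y := by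
  let e := (Finite.equivFin V1).symm
  have hy : ∀ i, f (e i) ∈ V2 := fun i => hrange ▸ Set.mem_range_self _
  have hxy : ∀ i j, (e i : V) ≠ f (e j) := fun i j h =>
    Set.disjoint_left.mp hb.1 (e i).2 (h ▸ hy j)
  refine ⟨_, fun i => e i, fun i => f (e i), fun i => (e i).2, hy,
    Subtype.val_injective.comp e.injective, hf.comp e.injective, hxy, fun v => ?_,
    fun i => hadj _⟩
  rcases (hb.2.1 ▸ Set.mem_univ v : v ∈ V1 ∪ V2) with hv | hv
  · exact Or.inl ⟨e.symm ⟨v, hv⟩, by simp only [e.apply_symm_apply]⟩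
  · obtain ⟨u, rfl⟩ := hrange ▸ hv
    exact Or.inr ⟨e.symm u, by simp only [e.apply_symm_apply]⟩

lemma Unmixed.exists_pMatch [Finite V] (hu : Unmixed G) (hb : IsBipartition G V1 V2)
    (hni : NoIsolated G) :
    ∃ (n : ℕ) (x y : Fin n → V), (∀ i, x i ∈ V1) ∧ (∀ i, y i ∈ V2) ∧ PMatch G n x y := by
  have h1 := hb.isMaxIndep_left hni
  have h2 := hb.symm.isMaxIndep_left hni
  obtain ⟨f, hf, hadj⟩ := exists_injective_adj_of_forall_ncard_le fun s hs =>
    hu.ncard_le_ncard_neighborSet hb.isBipartiteWith h2 hs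
  have hfV2 : Set.range f ⊆ V2 :=
    Set.range_subset_iff.2 fun u => hb.isBipartiteWith.mem_of_mem_adj u.2 (hadj u)
  have hrange : Set.range f = V2 := Set.eq_of_subset_of_ncard_le hfV2 <| by
    rw [Set.ncard_range_of_injective hf, Nat.card_coe_set_eq, hu V2 V1 h2 h1]
  exact hb.exists_pMatch_of_injective f hf hrange hadj

end

namespace PMatch

variable {G : SimpleGraph V} {s : Set V} {n : ℕ} {x y : Fin n → V}

lemma ncard_eq_of_isIndep (hm : PMatch G n x y) (hs : IsIndep G s) :
    s.ncard = {i | x i ∈ s ∨ y i ∈ s}.ncard := by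
  classical
  obtain ⟨hx, hy, hxy, hcov, hadj⟩ := hm
  let pick : Fin n → V := fun i => if x i ∈ s then x i else y i
  have hpick : Function.Injective pick := by
    intro i j h
    simp only [pick] at h
    split_ifs at h
    · exact hx h
    · exact absurd h (hxy i j)
    · exact absurd h.symm (hxy j i)
    · exact hy h
  have himage : pick '' {i | x i ∈ s ∨ y i ∈ s} = s := by
    ext v
    constructor
    · rintro ⟨i, hi, rfl⟩
      by_cases h : x i ∈ s
      · simp [pick, h]
      · simpa [pick, h] using hi.resolve_left h
    · intro hv
      rcases hcov v with ⟨i, rfl⟩ | ⟨i, rfl⟩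
      · exact ⟨i, Or.inl hv, if_pos hv⟩
      · have hxi : x i ∉ s := fun hxs => hs hxs hv (hxy i i) (hadj i)
        exact ⟨i, Or.inr hv, if_neg hxi⟩
  rw [← Set.ncard_image_of_injective _ hpick, himage]

lemma ncard_lt_of_isIndep (hm : PMatch G n x y) (hs : IsIndep G s) {i : Fin n}
    (hx : x i ∉ s) (hy : y i ∉ s) : s.ncard < n := by
  rw [hm.ncard_eq_of_isIndep hs]
  calc _ < (Set.univ : Set (Fin n)).ncard :=
        Set.ncard_lt_ncard ⟨Set.subset_univ _, fun h => (h (Set.mem_univ i)).elim hx hy⟩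
    _ = n := by simp

lemma ncard_eq_of_isMaxIndep (hm : PMatch G n x y) (hc : Cond1 G n x y)
    (hs : IsMaxIndep G s) : s.ncard = n := by
  have hmeet : ∀ i, x i ∈ s ∨ y i ∈ s := by
    intro i
    by_contra! h
    obtain ⟨b, hbs, hxb⟩ := hs.exists_adj_of_notMem h.1
    obtain ⟨a, has, hya⟩ := hs.exists_adj_of_notMem h.2
    have hab := hc i a hya b hxb
    exact hs.1 has hbs hab.ne hab
  simp [hm.ncard_eq_of_isIndep hs.1, hmeet]

lemma unmixed (hm : PMatch G n x y) (hc : Cond1 G n x y) : Unmixed G :=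
  fun _ _ hs ht => (hm.ncard_eq_of_isMaxIndep hc hs).trans (hm.ncard_eq_of_isMaxIndep hc ht).symm

end PMatch

/-- If `a ∈ N(y i)` and `b ∈ N(x i)` were not adjacent, a maximal independent set through `a` and
`b` would miss the whole edge `{x i, y i}` and so be smaller than one containing `range x`. -/
lemma Unmixed.cond1 [Finite V] {G : SimpleGraph V} {n : ℕ} {x y : Fin n → V} (hu : Unmixed G)
    (hm : PMatch G n x y) (hx : IsIndep G (Set.range x)) : Cond1 G n x y := by
  intro i a hya b hxb
  by_contra hab
  obtain ⟨w, habw, hw⟩ := (isIndep_pair hab).exists_isMaxIndep_superset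
  have hlt := hm.ncard_lt_of_isIndep hw.1
    (fun h => hw.1 h (habw (by simp)) hxb.ne hxb) (fun h => hw.1 h (habw (by simp)) hya.ne hya)
  have hle := hu.ncard_le_of_isIndep hw hx
  rw [Set.ncard_range_of_injective hm.1, Nat.card_fin] at hle
  omega

/-- A bipartite graph with no isolated vertices is unmixed iff it has a perfect
matching `{x i, y i}` with `x i ∈ V1`, `y i ∈ V2`, satisfying condition 1. -/
theorem stmt6 [Fintype V] (G : SimpleGraph V) (V1 V2 : Set V)
    (hb : IsBipartition G V1 V2) (hni : NoIsolated G) :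
    Unmixed G ↔ ∃ (n : ℕ) (x y : Fin n → V),
      (∀ i, x i ∈ V1) ∧ (∀ i, y i ∈ V2) ∧ PMatch G n x y ∧ Cond1 G n x y := by
  refine ⟨fun hu => ?_, fun ⟨n, x, y, _, _, hm, hc⟩ => hm.unmixed hc⟩
  obtain ⟨n, x, y, hx, hy, hm⟩ := hu.exists_pMatch hb hni
  have hxind : IsIndep G (Set.range x) :=
    hb.isBipartiteWith.isIndep_left.mono (Set.range_subset_iff.2 hx)
  exact ⟨n, x, y, hx, hy, hm, hu.cond1 hm hxind⟩
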